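/- Let β > 0, let θ̄_prev > δ ≥ 0 with θ̄_prev - δ > 0, and let θ̄_a > 0 with θ̄_a ≥ θ̄_prev - δ. If an error satisfies e(τ_a + Δ) ≤ e(τ_a) · exp(-β Δ) and e(τ_a) ≤ θ̄_a, then the dwell time condition Δ ≥ -(1/β) · ln((θ̄_prev - δ)/θ̄_a) implies e(τ_a + Δ) ≤ θ̄_prev - δ. -/

import Mathlib

lemma exp_neg_mul_le_of_neg_one_div_mul_log_le {β c Δ : ℝ} (hβ : 0 < β) (hc : 0 < c)
    (h : -(1 / β) * Real.log c ≤ Δ) : Real.exp (-β * Δ) ≤ c := by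
  rw [← Real.le_log_iff_exp_le hc]
  have hscaled : -Real.log c ≤ β * Δ := by
    simpa [neg_mul, ← mul_assoc, hβ.ne'] using mul_le_mul_of_nonneg_left h hβ.le
  linarith

theorem stmt_2_general (β δ θprev θa τa Δ : ℝ) (e : ℝ → ℝ)
    (hβ : 0 < β) (hprevδ : 0 < θprev - δ)
    (hθa : 0 < θa)
    (hdecay : e (τa + Δ) ≤ e τa * Real.exp (-β * Δ))
    (hinit : e τa ≤ θa)
    (hdwell : Δ ≥ -(1 / β) * Real.log ((θprev - δ) / θa)) :
    e (τa + Δ) ≤ θprev - δ := by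
  have hexp : Real.exp (-β * Δ) ≤ (θprev - δ) / θa :=
    exp_neg_mul_le_of_neg_one_div_mul_log_le hβ (div_pos hprevδ hθa) hdwell
  calc e (τa + Δ) ≤ e τa * Real.exp (-β * Δ) := hdecay
    _ ≤ θa * Real.exp (-β * Δ) := by gcongr
    _ ≤ θa * ((θprev - δ) / θa) := by gcongr
    _ = θprev - δ := mul_div_cancel₀ _ hθa.ne'

theorem stmt_2 (β δ θprev θa τa Δ : ℝ) (e : ℝ → ℝ)
    (hβ : 0 < β) (hδ : 0 ≤ δ) (hprev : δ < θprev) (hprevδ : 0 < θprev - δ)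
    (hθa : 0 < θa) (hge : θprev - δ ≤ θa)
    (hdecay : e (τa + Δ) ≤ e τa * Real.exp (-β * Δ))
    (hinit : e τa ≤ θa)
    (hdwell : Δ ≥ -(1 / β) * Real.log ((θprev - δ) / θa)) :
    e (τa + Δ) ≤ θprev - δ :=
  stmt_2_general β δ θprev θa τa Δ e hβ hprevδ hθa hdecay hinit hdwell
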